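/- arXiv:2605.15356 — 2 statements merged into one kernel-verified Lean document; each statement's English description precedes it below -/
import Mathlib

section
/- Let ν be a probability measure on ℝ^d, let g, ĝ : ℝ^d → ℝ be measurable, define M = { u : 𝟙_{g(u)≤0} ≠ 𝟙_{ĝ(u)≤0} }, and suppose the margin condition ν({u : |g(u)| ≤ τ}) ≤ C_m τ^κ holds for all 0 < τ ≤ τ₀, with constants C_m > 0, κ > 0, τ₀ > 0. Let ε = ( ∫ (g - ĝ)² dν )^{1/2} and assume 0 < ε^{2/(κ+2)} ≤ τ₀. Then ν(M) ≤ (C_m + 1) · ε^{2κ/(κ+2)}. -/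
/-!
Where the true and surrogate failure indicators disagree, `g` and `ĝ` have opposite signs, so
`|g| ≤ |g - ĝ|`. Hence for any threshold `τ > 0` the disagreement set lies in `{|g| ≤ τ}`,
controlled by the margin condition, or in `{τ ≤ |g - ĝ|}`, controlled by Chebyshev's inequality:
`ν(M) ≤ C_m τ^κ + ε² / τ²`. The choice `τ = ε^{2/(κ+2)}` makes both terms equal to `ε^{2κ/(κ+2)}`.
-/

open MeasureTheory Set

theorem abs_le_abs_sub_of_nonpos_ne {R : Type*} [AddCommGroup R] [LinearOrder R]
    [IsOrderedAddMonoid R] {a b : R} (h : (a ≤ 0) ≠ (b ≤ 0)) : |a| ≤ |a - b| := by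
  rcases le_or_gt a 0 with ha | ha <;> rcases le_or_gt b 0 with hb | hb
  · simp [ha, hb] at h
  · rw [abs_of_nonpos ha, abs_sub_comm, abs_of_pos (sub_pos.mpr (ha.trans_lt hb))]
    simpa using sub_le_sub_right hb.le a
  · rw [abs_of_pos ha, abs_of_pos (sub_pos.mpr (hb.trans_lt ha))]
    simpa using sub_le_sub_left hb a
  · simp [ha.not_ge, hb.not_ge] at h

theorem measureReal_nonpos_ne_le_add_integral_sq_div {α : Type*} [MeasurableSpace α]
    {μ : Measure α} [IsFiniteMeasure μ] {f h : α → ℝ}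
    (hint : Integrable (fun x => (f x - h x) ^ 2) μ) {τ : ℝ} (hτ : 0 < τ) :
    μ.real {x | (f x ≤ 0) ≠ (h x ≤ 0)}
      ≤ μ.real {x | |f x| ≤ τ} + (∫ x, (f x - h x) ^ 2 ∂μ) / τ ^ 2 := by
  have hcover : {x | (f x ≤ 0) ≠ (h x ≤ 0)}
      ⊆ {x | |f x| ≤ τ} ∪ {x | τ ^ 2 ≤ (f x - h x) ^ 2} := by
    intro x hx
    refine (le_or_gt |f x| τ).imp id fun hfar => ?_
    rw [mem_ofPred_eq, ← sq_abs (f x - h x)]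
    exact pow_le_pow_left₀ hτ.le (hfar.le.trans (abs_le_abs_sub_of_nonpos_ne hx)) 2
  have hmarkov : μ.real {x | τ ^ 2 ≤ (f x - h x) ^ 2} ≤ (∫ x, (f x - h x) ^ 2 ∂μ) / τ ^ 2 := by
    rw [le_div_iff₀ (by positivity), mul_comm]
    exact mul_meas_ge_le_integral_of_nonneg (ae_of_all _ fun x => sq_nonneg _) hint _
  calc μ.real {x | (f x ≤ 0) ≠ (h x ≤ 0)}
      ≤ μ.real ({x | |f x| ≤ τ} ∪ {x | τ ^ 2 ≤ (f x - h x) ^ 2}) := measureReal_mono hcover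
    _ ≤ μ.real {x | |f x| ≤ τ} + μ.real {x | τ ^ 2 ≤ (f x - h x) ^ 2} :=
      measureReal_union_le _ _
    _ ≤ _ := by gcongr

theorem mul_rpow_add_sq_div_sq_eq_at_balanced_threshold (C : ℝ) {ε κ : ℝ} (hε : 0 < ε)
    (hκ : κ + 2 ≠ 0) :
    C * (ε ^ (2 / (κ + 2))) ^ κ + ε ^ 2 / (ε ^ (2 / (κ + 2))) ^ 2
      = (C + 1) * ε ^ (2 * κ / (κ + 2)) := by
  have hmargin_term : (ε ^ (2 / (κ + 2))) ^ κ = ε ^ (2 * κ / (κ + 2)) := by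
    rw [← Real.rpow_mul hε.le]
    ring_nf
  have hchebyshev_term : ε ^ 2 / (ε ^ (2 / (κ + 2))) ^ 2 = ε ^ (2 * κ / (κ + 2)) := by
    rw [← Real.rpow_mul_natCast hε.le, ← Real.rpow_natCast, ← Real.rpow_sub hε]
    congr 1
    field_simp
    ring
  rw [hmargin_term, hchebyshev_term]
  ring

theorem surrogate_misclassification_bound_general
    (d : ℕ) (ν : Measure (Fin d → ℝ)) [IsProbabilityMeasure ν]
    (g gHat : (Fin d → ℝ) → ℝ)
    (Cm κ τ₀ : ℝ) (hκ : 0 < κ)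
    (hmargin : ∀ τ : ℝ, 0 < τ → τ ≤ τ₀ → (ν {u | |g u| ≤ τ}).toReal ≤ Cm * τ ^ κ)
    (hInt : Integrable (fun u => (g u - gHat u) ^ 2) ν)
    (hεpos : 0 < (Real.sqrt (∫ u, (g u - gHat u) ^ 2 ∂ν)) ^ (2 / (κ + 2)))
    (hετ₀ : (Real.sqrt (∫ u, (g u - gHat u) ^ 2 ∂ν)) ^ (2 / (κ + 2)) ≤ τ₀) :
    (ν {u | (g u ≤ 0) ≠ (gHat u ≤ 0)}).toReal
      ≤ (Cm + 1)
          * (Real.sqrt (∫ u, (g u - gHat u) ^ 2 ∂ν)) ^ (2 * κ / (κ + 2)) := by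
  set ε := Real.sqrt (∫ u, (g u - gHat u) ^ 2 ∂ν)
  have hε : 0 < ε := by
    refine (Real.sqrt_nonneg _).lt_of_ne' fun hε0 => hεpos.ne' ?_
    rw [show ε = 0 from hε0, Real.zero_rpow (by positivity)]
  set τ := ε ^ (2 / (κ + 2))
  have hε_sq : ε ^ 2 = ∫ u, (g u - gHat u) ^ 2 ∂ν :=
    Real.sq_sqrt (integral_nonneg fun u => sq_nonneg _)
  calc (ν {u | (g u ≤ 0) ≠ (gHat u ≤ 0)}).toReal
      ≤ (ν {u | |g u| ≤ τ}).toReal + (∫ u, (g u - gHat u) ^ 2 ∂ν) / τ ^ 2 :=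
        measureReal_nonpos_ne_le_add_integral_sq_div hInt hεpos
    _ ≤ Cm * τ ^ κ + ε ^ 2 / τ ^ 2 := by
        rw [hε_sq]
        gcongr
        exact hmargin τ hεpos hετ₀
    _ = (Cm + 1) * ε ^ (2 * κ / (κ + 2)) :=
        mul_rpow_add_sq_div_sq_eq_at_balanced_threshold Cm hε (by positivity)

/-- Surrogate-induced event misclassification lemma: under the margin condition
`ν(|g| ≤ τ) ≤ C_m τ^κ` for `0 < τ ≤ τ₀`, with local surrogate error
`ε = (∫ (g - ĝ)² dν)^{1/2}` satisfying `0 < ε^{2/(κ+2)} ≤ τ₀`, the set `M` where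
the failure indicators `𝟙_{g≤0}` and `𝟙_{ĝ≤0}` disagree satisfies
`ν(M) ≤ (C_m + 1) ε^{2κ/(κ+2)}`. -/
theorem surrogate_misclassification_bound
    (d : ℕ) (ν : Measure (Fin d → ℝ)) [IsProbabilityMeasure ν]
    (g gHat : (Fin d → ℝ) → ℝ)
    (hg : Measurable g) (hgHat : Measurable gHat)
    (Cm κ τ₀ : ℝ) (hCm : 0 < Cm) (hκ : 0 < κ) (hτ₀ : 0 < τ₀)
    (hmargin : ∀ τ : ℝ, 0 < τ → τ ≤ τ₀ → (ν {u | |g u| ≤ τ}).toReal ≤ Cm * τ ^ κ)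
    (hInt : Integrable (fun u => (g u - gHat u) ^ 2) ν)
    (hεpos : 0 < (Real.sqrt (∫ u, (g u - gHat u) ^ 2 ∂ν)) ^ (2 / (κ + 2)))
    (hετ₀ : (Real.sqrt (∫ u, (g u - gHat u) ^ 2 ∂ν)) ^ (2 / (κ + 2)) ≤ τ₀) :
    (ν {u | (g u ≤ 0) ≠ (gHat u ≤ 0)}).toReal
      ≤ (Cm + 1)
          * (Real.sqrt (∫ u, (g u - gHat u) ^ 2 ∂ν)) ^ (2 * κ / (κ + 2)) :=
  surrogate_misclassification_bound_general d ν g gHat Cm κ τ₀ hκ hmargin hInt hεpos hετ₀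
end

section
/- Let p and q be probability densities on ℝ^d with p(u) ≤ C_∞ q(u) a.e. (C_∞ > 0 finite), let ν be the probability measure with density q, and let g, ĝ : ℝ^d → ℝ be measurable. Suppose: (i) the margin condition ν({|g| ≤ τ}) ≤ C_m τ^κ holds for all 0 < τ ≤ τ₀ (C_m > 0, κ > 0, τ₀ > 0); (ii) ε := (∫ (g−ĝ)² dν)^{1/2} satisfies 0 < ε^{2/(κ+2)} ≤ τ₀; (iii) P̂ := ∫ 𝟙_{ĝ≤0} p du > 0 and ∫ 𝟙_{ĝ≤0} p²/q du < ∞. Let P_F = ∫ 𝟙_{g≤0} p du, let q̂⋆(u) = 𝟙_{ĝ(u)≤0} p(u)/P̂, and let χ² = ∫ q̂⋆(u)²/q(u) du − 1. Let U₁, …, U_N be i.i.d. with law ν and P̂_N = (1/N) Σ_{i=1}^{N} 𝟙_{ĝ(U_i)≤0} p(U_i)/q(U_i). Then 𝔼[ |P̂_N − P_F| ] ≤ C_∞ (C_m + 1) ε^{2κ/(κ+2)} + (P̂ / √N) √(χ²). -/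
/-!
The error splits, by the triangle inequality, into the misclassification bias `|P̂ - P_F|` and
the Monte Carlo error of `P̂_N` around its mean `P̂`.

The bias is at most the `p`-mass of the symmetric difference `{ĝ ≤ 0} ∆ {g ≤ 0}`, hence at most
`C_∞` times its `ν`-mass. A point there either lies in the margin band `|g| ≤ τ`, or has
`|g - ĝ| ≥ |g| > τ`, since `g` and `ĝ` have opposite signs; the margin condition and Chebyshev
bound the two parts by `C_m τ ^ κ` and `ε ^ 2 / τ ^ 2`, and `τ = ε ^ (2 / (κ + 2))` balances them.

The weights `𝟙_{ĝ ≤ 0} p / q` are i.i.d. under `ν` with mean `P̂` and variance `P̂ ^ 2 χ²`, so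
`P̂_N` has variance `P̂ ^ 2 χ² / N`, and `𝔼|X - 𝔼 X| ≤ √(Var X)` finishes.
-/

open MeasureTheory Set ProbabilityTheory
open scoped symmDiff

section Misclassification

variable {α : Type*}

lemma symmDiff_setOf_nonpos_subset {g gHat : α → ℝ} {τ : ℝ} (hτ : 0 ≤ τ) :
    {u | gHat u ≤ 0} ∆ {u | g u ≤ 0} ⊆ {u | |g u| ≤ τ} ∪ {u | τ ^ 2 ≤ (g u - gHat u) ^ 2} := by
  intro u hu
  by_cases hg : |g u| ≤ τ
  · exact Or.inl hg
  right
  have hsign : g u * gHat u ≤ 0 := by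
    simp only [mem_symmDiff, mem_ofPred_eq, not_le] at hu
    rcases hu with ⟨h1, h2⟩ | ⟨h1, h2⟩ <;> nlinarith
  have hτg : τ ^ 2 < g u ^ 2 := by
    rw [← sq_abs (g u)]
    exact pow_lt_pow_left₀ (not_le.1 hg) hτ two_ne_zero
  show τ ^ 2 ≤ (g u - gHat u) ^ 2
  nlinarith [sq_nonneg (gHat u)]

lemma rpow_margin_add_sq_div_rpow_sq {ε κ : ℝ} (hε : 0 < ε) (hκ : κ + 2 ≠ 0) (C : ℝ) :
    C * (ε ^ (2 / (κ + 2))) ^ κ + ε ^ 2 / (ε ^ (2 / (κ + 2))) ^ 2 =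
      (C + 1) * ε ^ (2 * κ / (κ + 2)) := by
  have hmargin : (ε ^ (2 / (κ + 2))) ^ κ = ε ^ (2 * κ / (κ + 2)) := by
    rw [← Real.rpow_mul hε.le]
    congr 1
    field_simp
  have hchebyshev : ε ^ 2 / (ε ^ (2 / (κ + 2))) ^ 2 = ε ^ (2 * κ / (κ + 2)) := by
    rw [← Real.rpow_natCast (ε ^ (2 / (κ + 2))) 2, ← Real.rpow_mul hε.le,
      ← Real.rpow_natCast ε 2, ← Real.rpow_sub hε]
    congr 1
    field_simp
    push_cast
    ring
  rw [hmargin, hchebyshev]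
  ring

variable [MeasurableSpace α]

lemma abs_setIntegral_sub_setIntegral_le_symmDiff {μ : Measure α} {p : α → ℝ}
    (hp0 : ∀ u, 0 ≤ p u) (hp : Integrable p μ) {A B : Set α} (hA : MeasurableSet A)
    (hB : MeasurableSet B) :
    |∫ u in A, p u ∂μ - ∫ u in B, p u ∂μ| ≤ ∫ u in A ∆ B, p u ∂μ := by
  rw [Set.symmDiff_def, setIntegral_union disjoint_sdiff_sdiff (hB.diff hA) hp.integrableOn
      hp.integrableOn, ← integral_inter_add_sdiff hB hp.integrableOn (s := A),
    ← integral_inter_add_sdiff hA hp.integrableOn (s := B), inter_comm B A,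
    add_sub_add_left_eq_sub]
  have hAB : 0 ≤ ∫ u in A \ B, p u ∂μ := setIntegral_nonneg (hA.diff hB) fun u _ => hp0 u
  have hBA : 0 ≤ ∫ u in B \ A, p u ∂μ := setIntegral_nonneg (hB.diff hA) fun u _ => hp0 u
  exact abs_sub_le_iff.2 ⟨by linarith, by linarith⟩

lemma measureReal_symmDiff_setOf_nonpos_le {ν : Measure α} [IsFiniteMeasure ν]
    {g gHat : α → ℝ} {τ : ℝ} (hτ : 0 < τ) (hint : Integrable (fun u => (g u - gHat u) ^ 2) ν) :
    ν.real ({u | gHat u ≤ 0} ∆ {u | g u ≤ 0}) ≤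
      ν.real {u | |g u| ≤ τ} + (∫ u, (g u - gHat u) ^ 2 ∂ν) / τ ^ 2 := by
  have hchebyshev : ν.real {u | τ ^ 2 ≤ (g u - gHat u) ^ 2} ≤
      (∫ u, (g u - gHat u) ^ 2 ∂ν) / τ ^ 2 := by
    rw [le_div_iff₀ (by positivity), mul_comm]
    exact mul_meas_ge_le_integral_of_nonneg (ae_of_all _ fun u => sq_nonneg _) hint _
  calc ν.real ({u | gHat u ≤ 0} ∆ {u | g u ≤ 0})
      ≤ ν.real ({u | |g u| ≤ τ} ∪ {u | τ ^ 2 ≤ (g u - gHat u) ^ 2}) :=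
        measureReal_mono (symmDiff_setOf_nonpos_subset hτ.le)
    _ ≤ _ := measureReal_union_le _ _
    _ ≤ _ := by gcongr

theorem abs_setIntegral_sub_le_of_margin {μ ν : Measure α} [IsFiniteMeasure ν]
    {p g gHat : α → ℝ} (hp0 : ∀ u, 0 ≤ p u) (hp : Integrable p μ) (hg : Measurable g)
    (hgHat : Measurable gHat) {C Cm κ ε : ℝ} (hC : 0 ≤ C)
    (hpν : ∀ S, MeasurableSet S → ∫ u in S, p u ∂μ ≤ C * ν.real S) (hκ : κ + 2 ≠ 0)
    (hint : Integrable (fun u => (g u - gHat u) ^ 2) ν) (hε : 0 < ε)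
    (hεsq : ∫ u, (g u - gHat u) ^ 2 ∂ν = ε ^ 2)
    (hmargin : ν.real {u | |g u| ≤ ε ^ (2 / (κ + 2))} ≤ Cm * (ε ^ (2 / (κ + 2))) ^ κ) :
    |∫ u in {u | gHat u ≤ 0}, p u ∂μ - ∫ u in {u | g u ≤ 0}, p u ∂μ| ≤
      C * (Cm + 1) * ε ^ (2 * κ / (κ + 2)) := by
  have hA : MeasurableSet {u | gHat u ≤ 0} := measurableSet_le hgHat measurable_const
  have hB : MeasurableSet {u | g u ≤ 0} := measurableSet_le hg measurable_const
  have hτ : 0 < ε ^ (2 / (κ + 2)) := Real.rpow_pos_of_pos hε _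
  calc _ ≤ ∫ u in {u | gHat u ≤ 0} ∆ {u | g u ≤ 0}, p u ∂μ :=
        abs_setIntegral_sub_setIntegral_le_symmDiff hp0 hp hA hB
    _ ≤ C * ν.real ({u | gHat u ≤ 0} ∆ {u | g u ≤ 0}) := hpν _ (hA.symmDiff hB)
    _ ≤ C * (Cm * (ε ^ (2 / (κ + 2))) ^ κ + ε ^ 2 / (ε ^ (2 / (κ + 2))) ^ 2) := by
        gcongr
        rw [← hεsq]
        exact (measureReal_symmDiff_setOf_nonpos_le hτ hint).trans (by gcongr)
    _ = C * (Cm + 1) * ε ^ (2 * κ / (κ + 2)) := by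
        rw [rpow_margin_add_sq_div_rpow_sq hε hκ, mul_assoc]

end Misclassification

section SampleMean

variable {Ω : Type*} [MeasurableSpace Ω] {P : Measure Ω} [IsProbabilityMeasure P]

lemma integral_abs_le_sqrt_integral_sq {Y : Ω → ℝ} (hY : MemLp Y 2 P) :
    ∫ ω, |Y ω| ∂P ≤ √(∫ ω, Y ω ^ 2 ∂P) := by
  have hvar := variance_nonneg |Y| P
  simp only [variance_eq_sub hY.abs, Pi.pow_apply, Pi.abs_apply, sq_abs] at hvar
  exact Real.le_sqrt_of_sq_le (by linarith)

lemma integral_abs_sub_integral_le_sqrt_variance {X : Ω → ℝ} (hX : MemLp X 2 P) :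
    ∫ ω, |X ω - P[X]| ∂P ≤ √(Var[X; P]) := by
  rw [variance_eq_integral hX.aemeasurable]
  exact integral_abs_le_sqrt_integral_sq (hX.sub (memLp_const _))

lemma integral_abs_sub_le_integral_abs_sub_add {Z : Ω → ℝ} (hZ : Integrable Z P) (a b : ℝ) :
    ∫ ω, |Z ω - b| ∂P ≤ ∫ ω, |Z ω - a| ∂P + |a - b| := by
  have hZa : Integrable (fun ω => |Z ω - a|) P := (hZ.sub (integrable_const a)).abs
  calc ∫ ω, |Z ω - b| ∂P ≤ ∫ ω, (|Z ω - a| + |a - b|) ∂P :=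
        integral_mono_of_nonneg (ae_of_all _ fun ω => abs_nonneg _)
          (hZa.add (integrable_const _)) (ae_of_all _ fun ω => abs_sub_le _ _ _)
    _ = ∫ ω, |Z ω - a| ∂P + |a - b| := by
        rw [integral_add hZa (integrable_const _), integral_const, probReal_univ, one_smul]

lemma integral_abs_sampleMean_sub_le {N : ℕ} (hN : N ≠ 0) {X : Fin N → Ω → ℝ}
    (hX : ∀ i, MemLp (X i) 2 P) (hindep : Pairwise fun i j => X i ⟂ᵢ[P] X j) {m v : ℝ}
    (hmean : ∀ i, P[X i] = m) (hvar : ∀ i, Var[X i; P] = v) :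
    ∫ ω, |(1 / (N : ℝ)) * ∑ i, X i ω - m| ∂P ≤ √(v / N) := by
  have hN' : (N : ℝ) ≠ 0 := Nat.cast_ne_zero.mpr hN
  have hZ : MemLp (fun ω => (1 / (N : ℝ)) * (∑ i, X i) ω) 2 P :=
    (memLp_finsetSum' _ fun i _ => hX i).const_mul _
  have hZ_mean : P[fun ω => (1 / (N : ℝ)) * (∑ i, X i) ω] = m := by
    simp only [Finset.sum_apply]
    rw [integral_const_mul, integral_finsetSum _ fun i _ => (hX i).integrable one_le_two]
    simp only [hmean, Finset.sum_const, Finset.card_univ, Fintype.card_fin, nsmul_eq_mul]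
    field_simp
  have hZ_var : Var[fun ω => (1 / (N : ℝ)) * (∑ i, X i) ω; P] = v / N := by
    rw [variance_const_mul, IndepFun.variance_sum (fun i _ => hX i)
      (fun i _ j _ hij => hindep hij)]
    simp only [hvar, Finset.sum_const, Finset.card_univ, Fintype.card_fin, nsmul_eq_mul]
    field_simp
  have := integral_abs_sub_integral_le_sqrt_variance hZ
  rw [hZ_mean, hZ_var] at this
  simpa only [Finset.sum_apply] using this

lemma integral_abs_sampleMean_comp_sub_le {α : Type*} [MeasurableSpace α] {ν : Measure α}
    {N : ℕ} (hN : N ≠ 0) {U : Fin N → Ω → α} (hU : ∀ i, Measurable (U i))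
    (hindep : iIndepFun U P) (hlaw : ∀ i, P.map (U i) = ν) {f : α → ℝ} (hf : Measurable f)
    (hf2 : MemLp f 2 ν) :
    ∫ ω, |(1 / (N : ℝ)) * ∑ i, f (U i ω) - ∫ u, f u ∂ν| ∂P ≤ √(Var[f; ν] / N) := by
  have hpres : ∀ i, MeasurePreserving (U i) P ν := fun i => ⟨hU i, hlaw i⟩
  refine integral_abs_sampleMean_sub_le hN (fun i => hf2.comp_measurePreserving (hpres i))
    (fun i j hij => (hindep.comp (fun _ => f) fun _ => hf).indepFun hij) (fun i => ?_)
    (fun i => (hpres i).variance_fun_comp hf.aemeasurable)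
  rw [← hlaw i, integral_map (hU i).aemeasurable hf.aestronglyMeasurable]
  rfl

end SampleMean

section ImportanceSampling

variable {α : Type*} [MeasurableSpace α] {μ : Measure α} {q : α → ℝ}

lemma measureReal_withDensity_ofReal {s : Set α} (hq : IntegrableOn q s μ)
    (hq0 : ∀ u, 0 ≤ q u) (hs : MeasurableSet s) :
    (μ.withDensity fun u => ENNReal.ofReal (q u)).real s = ∫ u in s, q u ∂μ := by
  rw [measureReal_def, withDensity_apply _ hs,
    ← ofReal_integral_eq_lintegral_ofReal hq (ae_of_all _ hq0),
    ENNReal.toReal_ofReal (setIntegral_nonneg hs fun u _ => hq0 u)]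

lemma setIntegral_le_mul_measureReal_withDensity {p : α → ℝ} {C : ℝ}
    (hp : Integrable p μ) (hq : Integrable q μ) (hq0 : ∀ u, 0 ≤ q u)
    (hpq : ∀ᵐ u ∂μ, p u ≤ C * q u) {S : Set α} (hS : MeasurableSet S) :
    ∫ u in S, p u ∂μ ≤ C * (μ.withDensity fun u => ENNReal.ofReal (q u)).real S := by
  rw [measureReal_withDensity_ofReal hq.integrableOn hq0 hS, ← integral_const_mul]
  exact setIntegral_mono_ae hp.integrableOn (hq.const_mul C).integrableOn hpq

lemma integral_withDensity_ofReal (hq : Measurable q) (hq0 : ∀ u, 0 ≤ q u) (f : α → ℝ) :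
    ∫ u, f u ∂μ.withDensity (fun u => ENNReal.ofReal (q u)) = ∫ u, q u * f u ∂μ := by
  rw [integral_withDensity_eq_integral_toReal_smul hq.ennreal_ofReal
    (ae_of_all _ fun _ => ENNReal.ofReal_lt_top)]
  simp only [ENNReal.toReal_ofReal (hq0 _), smul_eq_mul]

lemma integrable_withDensity_ofReal_iff (hq : Measurable q) (hq0 : ∀ u, 0 ≤ q u)
    {f : α → ℝ} :
    Integrable f (μ.withDensity fun u => ENNReal.ofReal (q u)) ↔
      Integrable (fun u => q u * f u) μ := by
  rw [integrable_withDensity_iff_integrable_smul' hq.ennreal_ofReal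
    (ae_of_all _ fun _ => ENNReal.ofReal_lt_top)]
  simp only [ENNReal.toReal_ofReal (hq0 _), smul_eq_mul]

lemma mul_div_sq_eq_sq_div (a b : ℝ) : b * (a / b) ^ 2 = a ^ 2 / b := by
  rcases eq_or_ne b 0 with h0 | h0
  · simp [h0]
  · field_simp

lemma integral_div_withDensity_ofReal (hq : Measurable q) (hq0 : ∀ u, 0 ≤ q u) {h : α → ℝ}
    (hhq : ∀ᵐ u ∂μ, q u = 0 → h u = 0) :
    ∫ u, h u / q u ∂μ.withDensity (fun u => ENNReal.ofReal (q u)) = ∫ u, h u ∂μ := by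
  rw [integral_withDensity_ofReal hq hq0]
  refine integral_congr_ae (hhq.mono fun u hu => ?_)
  rcases eq_or_ne (q u) 0 with h0 | h0
  · simp [h0, hu h0]
  · exact mul_div_cancel₀ _ h0

lemma integral_div_sq_withDensity_ofReal (hq : Measurable q) (hq0 : ∀ u, 0 ≤ q u)
    (h : α → ℝ) :
    ∫ u, (h u / q u) ^ 2 ∂μ.withDensity (fun u => ENNReal.ofReal (q u)) =
      ∫ u, h u ^ 2 / q u ∂μ := by
  simp only [integral_withDensity_ofReal hq hq0, mul_div_sq_eq_sq_div]

lemma memLp_two_div_withDensity_ofReal (hq : Measurable q) (hq0 : ∀ u, 0 ≤ q u) {h : α → ℝ}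
    (hh : Measurable h) (hint : Integrable (fun u => h u ^ 2 / q u) μ) :
    MemLp (fun u => h u / q u) 2 (μ.withDensity fun u => ENNReal.ofReal (q u)) := by
  rw [memLp_two_iff_integrable_sq (f := fun u => h u / q u) (hh.div hq).aestronglyMeasurable,
    integrable_withDensity_ofReal_iff hq hq0]
  simpa only [mul_div_sq_eq_sq_div] using hint

/-- With `P̂ = ∫ h`, the right-hand side is `P̂ ^ 2 χ²(q̂⋆ ‖ q)` for the density `q̂⋆ = h / P̂`. -/
lemma variance_div_withDensity_ofReal (hq : Measurable q) (hq0 : ∀ u, 0 ≤ q u)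
    [IsProbabilityMeasure (μ.withDensity fun u => ENNReal.ofReal (q u))] {h : α → ℝ}
    (hh : Measurable h) (hint : Integrable (fun u => h u ^ 2 / q u) μ)
    (hhq : ∀ᵐ u ∂μ, q u = 0 → h u = 0) (hP : ∫ u, h u ∂μ ≠ 0) :
    Var[fun u => h u / q u; μ.withDensity fun u => ENNReal.ofReal (q u)] =
      (∫ u, h u ∂μ) ^ 2 * ((∫ u, (h u / ∫ v, h v ∂μ) ^ 2 / q u ∂μ) - 1) := by
  have hchi : ∫ u, (h u / ∫ v, h v ∂μ) ^ 2 / q u ∂μ =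
      (∫ u, h u ^ 2 / q u ∂μ) / (∫ u, h u ∂μ) ^ 2 := by
    simp_rw [div_pow, div_right_comm _ ((∫ v, h v ∂μ) ^ 2)]
    exact integral_div _ _
  rw [variance_eq_sub (memLp_two_div_withDensity_ofReal hq hq0 hh hint)]
  simp only [Pi.pow_apply]
  rw [integral_div_sq_withDensity_ofReal hq hq0, integral_div_withDensity_ofReal hq hq0 hhq,
    hchi]
  field_simp

theorem integral_abs_importanceSampling_sub_le {Ω : Type*} [MeasurableSpace Ω]
    {P : Measure Ω} [IsProbabilityMeasure P] (hq : Measurable q) (hq0 : ∀ u, 0 ≤ q u)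
    {h : α → ℝ} (hh : Measurable h) (hint : Integrable (fun u => h u ^ 2 / q u) μ)
    (hhq : ∀ᵐ u ∂μ, q u = 0 → h u = 0) (hP : 0 < ∫ u, h u ∂μ) {N : ℕ} (hN : N ≠ 0)
    {U : Fin N → Ω → α} (hU : ∀ i, Measurable (U i)) (hindep : iIndepFun U P)
    (hlaw : ∀ i, P.map (U i) = μ.withDensity fun u => ENNReal.ofReal (q u)) :
    ∫ ω, |(1 / (N : ℝ)) * ∑ i, h (U i ω) / q (U i ω) - ∫ u, h u ∂μ| ∂P ≤
      (∫ u, h u ∂μ) / √N * √((∫ u, (h u / ∫ v, h v ∂μ) ^ 2 / q u ∂μ) - 1) := by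
  have : IsProbabilityMeasure (μ.withDensity fun u => ENNReal.ofReal (q u)) :=
    hlaw ⟨0, Nat.pos_of_ne_zero hN⟩ ▸ Measure.isProbabilityMeasure_map (hU _).aemeasurable
  have hmc := integral_abs_sampleMean_comp_sub_le (f := fun u => h u / q u) hN hU hindep hlaw
    (hh.div hq) (memLp_two_div_withDensity_ofReal hq hq0 hh hint)
  rwa [variance_div_withDensity_ofReal hq hq0 hh hint hhq hP.ne',
    integral_div_withDensity_ofReal hq hq0 hhq, Real.sqrt_div' _ (Nat.cast_nonneg N),
    Real.sqrt_mul (sq_nonneg _), Real.sqrt_sq hP.le, mul_div_right_comm] at hmc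

end ImportanceSampling

theorem finite_sample_surrogate_error_decomposition_general
    (d : ℕ) (p q g gHat : (Fin d → ℝ) → ℝ)
    (hp : Measurable p) (hq : Measurable q) (hg : Measurable g) (hgHat : Measurable gHat)
    (hp0 : ∀ u, 0 ≤ p u) (hq0 : ∀ u, 0 ≤ q u)
    (hp1 : ∫ u, p u = 1) (hq1 : ∫ u, q u = 1)
    (Cinf : ℝ) (hCinf : 0 < Cinf)
    (hbound : ∀ᵐ u, p u ≤ Cinf * q u)
    (Cm κ τ₀ : ℝ) (hκ : 0 < κ)
    (hmargin : ∀ τ : ℝ, 0 < τ → τ ≤ τ₀ →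
      ((volume.withDensity fun u => ENNReal.ofReal (q u)) {u | |g u| ≤ τ}).toReal
        ≤ Cm * τ ^ κ)
    (hIntErr : Integrable (fun u => (g u - gHat u) ^ 2)
      (volume.withDensity fun u => ENNReal.ofReal (q u)))
    (hεpos : 0 < (Real.sqrt (∫ u, (g u - gHat u) ^ 2
        ∂(volume.withDensity fun u => ENNReal.ofReal (q u)))) ^ (2 / (κ + 2)))
    (hετ₀ : (Real.sqrt (∫ u, (g u - gHat u) ^ 2
        ∂(volume.withDensity fun u => ENNReal.ofReal (q u)))) ^ (2 / (κ + 2)) ≤ τ₀)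
    (hP : 0 < ∫ u in {u | gHat u ≤ 0}, p u)
    (hInt2 : Integrable (fun u =>
      Set.indicator {u | gHat u ≤ 0} (fun u => (p u) ^ 2 / q u) u))
    (N : ℕ) (hN : 1 ≤ N)
    (Ω' : Type*) [MeasurableSpace Ω'] (P : Measure Ω') [IsProbabilityMeasure P]
    (U : Fin N → Ω' → (Fin d → ℝ))
    (hUmeas : ∀ i, Measurable (U i))
    (hiid : ProbabilityTheory.iIndepFun U P)
    (hlaw : ∀ i, P.map (U i) = volume.withDensity fun u => ENNReal.ofReal (q u)) :
    (∫ ω, |(1 / (N : ℝ)) * ∑ i : Fin N,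
          Set.indicator {u | gHat u ≤ 0} (fun u => p u / q u) (U i ω)
        - ∫ u in {u | g u ≤ 0}, p u| ∂P)
      ≤ Cinf * (Cm + 1)
            * (Real.sqrt (∫ u, (g u - gHat u) ^ 2
                ∂(volume.withDensity fun u => ENNReal.ofReal (q u)))) ^ (2 * κ / (κ + 2))
        + ((∫ u in {u | gHat u ≤ 0}, p u) / Real.sqrt (N : ℝ))
            * Real.sqrt ((∫ u, (Set.indicator {u | gHat u ≤ 0} (fun v => p v) u
                  / (∫ v in {v | gHat v ≤ 0}, p v)) ^ 2 / q u) - 1) := by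
  set A : Set (Fin d → ℝ) := {u | gHat u ≤ 0}
  have hA : MeasurableSet A := measurableSet_le hgHat measurable_const
  have hpInt : Integrable p := .of_integral_ne_zero (by rw [hp1]; exact one_ne_zero)
  have hqInt : Integrable q := .of_integral_ne_zero (by rw [hq1]; exact one_ne_zero)
  have := isFiniteMeasure_withDensity_ofReal (μ := volume) hqInt.hasFiniteIntegral
  set ε := √(∫ u, (g u - gHat u) ^ 2 ∂volume.withDensity fun u => ENNReal.ofReal (q u))
  have hε : 0 < ε := by
    contrapose! hεpos
    rw [le_antisymm hεpos (Real.sqrt_nonneg _), Real.zero_rpow (by positivity)]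
  have hbias := abs_setIntegral_sub_le_of_margin hp0 hpInt hg hgHat hCinf.le
    (fun S hS => setIntegral_le_mul_measureReal_withDensity hpInt hqInt hq0 hbound hS)
    (by positivity) hIntErr hε (Real.sq_sqrt (integral_nonneg fun u => sq_nonneg _)).symm
    (hmargin _ hεpos hετ₀)
  have hpq : ∀ᵐ u, q u = 0 → A.indicator p u = 0 := hbound.mono fun u hu hqu =>
    indicator_apply_eq_zero.2 fun _ => le_antisymm (by simpa [hqu] using hu) (hp0 u)
  have hsq : (fun u => A.indicator p u ^ 2 / q u) = A.indicator (fun u => p u ^ 2 / q u) := by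
    ext u; by_cases hu : u ∈ A <;> simp [hu]
  have hweight : A.indicator (fun u => p u / q u) = fun u => A.indicator p u / q u := by
    ext u; by_cases hu : u ∈ A <;> simp [hu]
  have hmc := integral_abs_importanceSampling_sub_le hq hq0 (hp.indicator hA) (hsq ▸ hInt2) hpq
    (by rwa [integral_indicator hA]) (by omega) hUmeas hiid hlaw
  rw [integral_indicator hA] at hmc
  have hweightL2 := memLp_two_div_withDensity_ofReal hq hq0 (hp.indicator hA) (hsq ▸ hInt2)
  have hmean : Integrable (fun ω => (1 / (N : ℝ)) * ∑ i, A.indicator p (U i ω) / q (U i ω)) P :=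
    (integrable_finsetSum _ fun i _ => (hweightL2.comp_measurePreserving
      ⟨hUmeas i, hlaw i⟩).integrable one_le_two).const_mul _
  rw [hweight]
  linarith [integral_abs_sub_le_integral_abs_sub_add hmean (∫ u in A, p u)
    (∫ u in {u | g u ≤ 0}, p u)]

/-- Finite-sample surrogate error decomposition: under the bounded likelihood
ratio `p ≤ C_∞ q` a.e., the margin condition `ν(|g| ≤ τ) ≤ C_m τ^κ` for
`0 < τ ≤ τ₀` (with `ν` the proposal measure with density `q`), local surrogate
error `ε = (∫ (g−ĝ)² dν)^{1/2}` with `0 < ε^{2/(κ+2)} ≤ τ₀`, and i.i.d. samples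
`U₁,…,U_N ∼ ν`, the surrogate-based estimator
`P̂_N = (1/N) ∑ᵢ 𝟙_{ĝ(Uᵢ)≤0} p(Uᵢ)/q(Uᵢ)` satisfies
`𝔼[|P̂_N − P_F|] ≤ C_∞ (C_m+1) ε^{2κ/(κ+2)} + (P̂/√N) √(χ²)`, where
`P_F = ∫_{g≤0} p`, `P̂ = ∫_{ĝ≤0} p`, `q̂⋆ = 𝟙_{ĝ≤0} p/P̂`, and
`χ² = ∫ q̂⋆²/q − 1`. -/
theorem finite_sample_surrogate_error_decomposition
    (d : ℕ) (p q g gHat : (Fin d → ℝ) → ℝ)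
    (hp : Measurable p) (hq : Measurable q) (hg : Measurable g) (hgHat : Measurable gHat)
    (hp0 : ∀ u, 0 ≤ p u) (hq0 : ∀ u, 0 ≤ q u)
    (hp1 : ∫ u, p u = 1) (hq1 : ∫ u, q u = 1)
    (Cinf : ℝ) (hCinf : 0 < Cinf)
    (hbound : ∀ᵐ u, p u ≤ Cinf * q u)
    (Cm κ τ₀ : ℝ) (hCm : 0 < Cm) (hκ : 0 < κ) (hτ₀ : 0 < τ₀)
    (hmargin : ∀ τ : ℝ, 0 < τ → τ ≤ τ₀ →
      ((volume.withDensity fun u => ENNReal.ofReal (q u)) {u | |g u| ≤ τ}).toReal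
        ≤ Cm * τ ^ κ)
    (hIntErr : Integrable (fun u => (g u - gHat u) ^ 2)
      (volume.withDensity fun u => ENNReal.ofReal (q u)))
    (hεpos : 0 < (Real.sqrt (∫ u, (g u - gHat u) ^ 2
        ∂(volume.withDensity fun u => ENNReal.ofReal (q u)))) ^ (2 / (κ + 2)))
    (hετ₀ : (Real.sqrt (∫ u, (g u - gHat u) ^ 2
        ∂(volume.withDensity fun u => ENNReal.ofReal (q u)))) ^ (2 / (κ + 2)) ≤ τ₀)
    (hP : 0 < ∫ u in {u | gHat u ≤ 0}, p u)
    (hInt2 : Integrable (fun u =>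
      Set.indicator {u | gHat u ≤ 0} (fun u => (p u) ^ 2 / q u) u))
    (N : ℕ) (hN : 1 ≤ N)
    (Ω' : Type*) [MeasurableSpace Ω'] (P : Measure Ω') [IsProbabilityMeasure P]
    (U : Fin N → Ω' → (Fin d → ℝ))
    (hUmeas : ∀ i, Measurable (U i))
    (hiid : ProbabilityTheory.iIndepFun U P)
    (hlaw : ∀ i, P.map (U i) = volume.withDensity fun u => ENNReal.ofReal (q u)) :
    (∫ ω, |(1 / (N : ℝ)) * ∑ i : Fin N,
          Set.indicator {u | gHat u ≤ 0} (fun u => p u / q u) (U i ω)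
        - ∫ u in {u | g u ≤ 0}, p u| ∂P)
      ≤ Cinf * (Cm + 1)
            * (Real.sqrt (∫ u, (g u - gHat u) ^ 2
                ∂(volume.withDensity fun u => ENNReal.ofReal (q u)))) ^ (2 * κ / (κ + 2))
        + ((∫ u in {u | gHat u ≤ 0}, p u) / Real.sqrt (N : ℝ))
            * Real.sqrt ((∫ u, (Set.indicator {u | gHat u ≤ 0} (fun v => p v) u
                  / (∫ v in {v | gHat v ≤ 0}, p v)) ^ 2 / q u) - 1) :=
  finite_sample_surrogate_error_decomposition_general d p q g gHat hp hq hg hgHat hp0 hq0 hp1 hq1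
    Cinf hCinf hbound Cm κ τ₀ hκ hmargin hIntErr hεpos hετ₀ hP hInt2 N hN Ω' P U hUmeas hiid hlaw
end
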